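/- If 0 < |B| < |B|_c and |ξ| > |ξ|_{vc}^B, then there exists s₀ > 0 (depending only on ρ₊, ρ₋, μ₊, μ₋, g, |B|, |ξ|) such that α(s) < 0 for every s with 0 < s ≤ s₀. -/

import Mathlib

open MeasureTheory Set Filter Topology

noncomputable section

/-- The set of Rayleigh quotients defining the critical magnetic number `|B|_c`. -/
def BcSet (g ρp ρm : ℝ) : Set ℝ :=
  {r | ∃ φ : ℝ → ℝ, (∃ K, LipschitzWith K φ) ∧ φ (-1) = 0 ∧ φ 1 = 0 ∧
    ¬ (∀ᵐ y ∂(volume.restrict (Icc (-1:ℝ) 1)), φ y = 0) ∧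
    r = g * (ρp - ρm) * (φ 0) ^ 2 / ∫ y in (-1:ℝ)..1, (deriv φ y) ^ 2}

/-- The set of quotients defining the vertical critical frequency `|ξ|_{vc}^B`. -/
def XivcSet (g ρp ρm B : ℝ) : Set ℝ :=
  {r | ∃ φ : ℝ → ℝ, ContDiff ℝ 2 φ ∧ φ (-1) = 0 ∧ φ 1 = 0 ∧
    deriv φ (-1) = 0 ∧ deriv φ 1 = 0 ∧
    0 < g * (ρp - ρm) * (φ 0) ^ 2 - B ^ 2 * ∫ y in (-1:ℝ)..1, (deriv φ y) ^ 2 ∧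
    r = (B ^ 2 * ∫ y in (-1:ℝ)..1, (deriv (deriv φ) y) ^ 2) /
        (g * (ρp - ρm) * (φ 0) ^ 2 - B ^ 2 * ∫ y in (-1:ℝ)..1, (deriv φ y) ^ 2)}

/-- The set of quotients defining the horizontal critical frequency `|ξ|_{hc}^B`. -/
def XihcSet (g ρp ρm B : ℝ) : Set ℝ :=
  {r | ∃ φ : ℝ → ℝ, (∃ K, LipschitzWith K φ) ∧ φ (-1) = 0 ∧ φ 1 = 0 ∧
    ¬ (∀ᵐ y ∂(volume.restrict (Icc (-1:ℝ) 1)), φ y = 0) ∧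
    r = (g * (ρp - ρm) * (φ 0) ^ 2 - B ^ 2 * ∫ y in (-1:ℝ)..1, (deriv φ y) ^ 2) /
        (B ^ 2 * ∫ y in (-1:ℝ)..1, (φ y) ^ 2)}

/-- The magnetic part `E₀` of the energy of the vertical problem. -/
def E0 (g ρp ρm B ξ : ℝ) (ψ : ℝ → ℝ) : ℝ :=
  (1/2) * (∫ y in (-1:ℝ)..1, B ^ 2 * ((deriv ψ y) ^ 2 + (deriv (deriv ψ) y) ^ 2 / ξ ^ 2)) -
    (1/2) * (g * (ρp - ρm)) * (ψ 0) ^ 2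

/-- The viscous part `E₁` of the energy, with piecewise viscosity `μ₊` above, `μ₋` below. -/
def E1 (μp μm ξ : ℝ) (ψ : ℝ → ℝ) : ℝ :=
  (1/2) * ∫ y in (-1:ℝ)..1,
    (if 0 < y then μp else μm) *
      (4 * ξ ^ 2 * (deriv ψ y) ^ 2 + (ξ ^ 2 * ψ y + deriv (deriv ψ) y) ^ 2)

/-- The normalization functional `J`, with piecewise density `ρ₊` above, `ρ₋` below. -/
def Jfun (ρp ρm ξ : ℝ) (ψ : ℝ → ℝ) : ℝ :=
  (1/2) * ∫ y in (-1:ℝ)..1,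
    (if 0 < y then ρp else ρm) * (ξ ^ 2 * (ψ y) ^ 2 + (deriv ψ y) ^ 2)

/-- `ψ` is an admissible test function: `C²` with vanishing boundary values of `ψ` and `ψ'`. -/
def Adm (ψ : ℝ → ℝ) : Prop :=
  ContDiff ℝ 2 ψ ∧ ψ (-1) = 0 ∧ ψ 1 = 0 ∧ deriv ψ (-1) = 0 ∧ deriv ψ 1 = 0

/-- `α(s)`: the infimum of the modified energy `E(ψ;s) = ξ²E₀(ψ) + sE₁(ψ)` over admissible
`ψ` normalized by `J(ψ) = 1`. -/
def alpha (ρp ρm μp μm g B ξ s : ℝ) : ℝ :=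
  sInf {r : ℝ | ∃ ψ : ℝ → ℝ, Adm ψ ∧ Jfun ρp ρm ξ ψ = 1 ∧
    r = ξ ^ 2 * E0 g ρp ρm B ξ ψ + s * E1 μp μm ξ ψ}

/-!
Both critical numbers are controlled by the Poincaré bound `2 φ(0)² ≤ ∫_{-1}^{1} φ'²` for
`φ(±1) = 0`, which is Cauchy–Schwarz applied to `φ(0) = ∫_{-1}^{0} φ'` and `-φ(0) = ∫_{0}^{1} φ'`.
It gives `|B|_c² ≤ g[ρ]/2`, so `2B² < g[ρ]`, and then smoothed tents `≈ 1 - |y|` show that the set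
defining `|ξ|_{vc}^B` is nonempty. Hence `|ξ| > |ξ|_{vc}^B` produces an admissible `φ` with
`B² ∫ φ''² < ξ² (g[ρ] φ(0)² - B² ∫ φ'²)`, that is `E₀(φ) < 0`; rescaled to `J = 1` it gives
`E(φ; s) < 0` for small `s`. The same Poincaré bound yields `ρ₋ φ(0)² ≤ J(φ)`, which bounds
`E(·; s)` from below, so `α(s)` is a genuine infimum.
-/

theorem sq_intervalIntegral_le_mul_integral_sq {f : ℝ → ℝ} {a b : ℝ} (hab : a ≤ b)
    (hf : IntervalIntegrable f volume a b)
    (hf2 : IntervalIntegrable (fun x => f x ^ 2) volume a b) :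
    (∫ x in a..b, f x) ^ 2 ≤ (b - a) * ∫ x in a..b, f x ^ 2 := by
  have hnonneg : 0 ≤ ∫ x in a..b, ((b - a) * f x - ∫ t in a..b, f t) ^ 2 :=
    intervalIntegral.integral_nonneg hab fun _ _ => sq_nonneg _
  have hexpand : ∫ x in a..b, ((b - a) * f x - ∫ t in a..b, f t) ^ 2
      = (b - a) * ((b - a) * (∫ x in a..b, f x ^ 2) - (∫ x in a..b, f x) ^ 2) := by
    have hpt : ∀ x, ((b - a) * f x - ∫ t in a..b, f t) ^ 2
        = (b - a) ^ 2 * f x ^ 2 - 2 * (b - a) * (∫ t in a..b, f t) * f x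
          + (∫ t in a..b, f t) ^ 2 := fun x => by ring
    simp_rw [hpt]
    rw [intervalIntegral.integral_add ((hf2.const_mul _).sub (hf.const_mul _))
        intervalIntegrable_const,
      intervalIntegral.integral_sub (hf2.const_mul _) (hf.const_mul _),
      intervalIntegral.integral_const_mul,
      intervalIntegral.integral_const_mul, intervalIntegral.integral_const, smul_eq_mul]
    ring
  rcases hab.eq_or_lt with rfl | hlt
  · simp
  · rw [hexpand] at hnonneg
    linarith [nonneg_of_mul_nonneg_right hnonneg (sub_pos.2 hlt)]

theorem AbsolutelyContinuousOnInterval.sq_sub_le_mul_integral_deriv_sq {f : ℝ → ℝ} {a b : ℝ}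
    (hab : a ≤ b) (hf : AbsolutelyContinuousOnInterval f a b)
    (hf2 : IntervalIntegrable (fun x => deriv f x ^ 2) volume a b) :
    (f b - f a) ^ 2 ≤ (b - a) * ∫ x in a..b, deriv f x ^ 2 := by
  rw [← hf.integral_deriv_eq_sub]
  exact sq_intervalIntegral_le_mul_integral_sq hab hf.intervalIntegrable_deriv hf2

theorem two_mul_sq_le_integral_deriv_sq {φ : ℝ → ℝ}
    (hl : AbsolutelyContinuousOnInterval φ (-1) 0) (hr : AbsolutelyContinuousOnInterval φ 0 1)
    (h2 : IntervalIntegrable (fun x => deriv φ x ^ 2) volume (-1) 1)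
    (hm1 : φ (-1) = 0) (hp1 : φ 1 = 0) :
    2 * φ 0 ^ 2 ≤ ∫ y in (-1:ℝ)..1, deriv φ y ^ 2 := by
  have hl2 : IntervalIntegrable (fun x => deriv φ x ^ 2) volume (-1) 0 :=
    h2.mono_set (uIcc_subset_uIcc_left (by norm_num))
  have hr2 : IntervalIntegrable (fun x => deriv φ x ^ 2) volume 0 1 :=
    h2.mono_set (uIcc_subset_uIcc_right (by norm_num))
  have hleft := hl.sq_sub_le_mul_integral_deriv_sq (by norm_num) hl2
  have hright := hr.sq_sub_le_mul_integral_deriv_sq (by norm_num) hr2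
  rw [← intervalIntegral.integral_add_adjacent_intervals hl2 hr2]
  simp only [hm1, hp1] at hleft hright
  linarith

theorem LipschitzWith.intervalIntegrable_deriv_sq {f : ℝ → ℝ} {K : NNReal} (hf : LipschitzWith K f)
    (a b : ℝ) : IntervalIntegrable (fun x => deriv f x ^ 2) volume a b := by
  refine (intervalIntegrable_const (c := (K : ℝ) ^ 2)).mono_fun
    ((measurable_deriv f).pow_const 2).aestronglyMeasurable (ae_of_all _ fun x => ?_)
  simp only [norm_pow, NNReal.norm_eq]
  exact pow_le_pow_left₀ (norm_nonneg _) (norm_deriv_le_of_lipschitz hf) 2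

theorem BcSet_le {g ρp ρm : ℝ} (hG : 0 ≤ g * (ρp - ρm)) :
    ∀ r ∈ BcSet g ρp ρm, r ≤ g * (ρp - ρm) / 2 := by
  rintro r ⟨φ, ⟨K, hK⟩, hm1, hp1, -, rfl⟩
  have hac : ∀ a b, AbsolutelyContinuousOnInterval φ a b := fun _ _ =>
    hK.lipschitzOnWith.absolutelyContinuousOnInterval
  have h := two_mul_sq_le_integral_deriv_sq (hac _ _) (hac _ _)
    (hK.intervalIntegrable_deriv_sq _ _) hm1 hp1
  refine div_le_of_le_mul₀ (by nlinarith [sq_nonneg (φ 0)]) (by positivity) ?_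
  nlinarith

theorem two_mul_sq_lt_of_abs_lt {g ρp ρm B Bc : ℝ} (hG : 0 ≤ g * (ρp - ρm))
    (hBcsq : Bc ^ 2 = sSup (BcSet g ρp ρm)) (hBlt : |B| < Bc) :
    2 * B ^ 2 < g * (ρp - ρm) := by
  have hBc : Bc ^ 2 ≤ g * (ρp - ρm) / 2 := hBcsq ▸ Real.sSup_le (BcSet_le hG) (by positivity)
  have hB : B ^ 2 < Bc ^ 2 := sq_abs B ▸ pow_lt_pow_left₀ hBlt (abs_nonneg B) two_ne_zero
  linarith

def plateau (ε y : ℝ) : ℝ :=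
  Real.smoothTransition ((y + 1) / ε) * Real.smoothTransition (-y / ε)

def tentSlope (ε y : ℝ) : ℝ := plateau ε y - plateau ε (-y)

/-- A `C²` smoothing of the tent `1 - |y|` on `[-1, 1]`, flattened at scale `ε` near `0`, `±1`. -/
def tent (ε y : ℝ) : ℝ := ∫ t in (-1:ℝ)..y, tentSlope ε t

section Tent

variable {ε : ℝ}

theorem contDiff_plateau {n : ℕ∞} (ε : ℝ) : ContDiff ℝ n (plateau ε) :=
  (Real.smoothTransition.contDiff.comp ((contDiff_id.add contDiff_const).div_const ε)).mul
    (Real.smoothTransition.contDiff.comp (contDiff_neg.div_const ε))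

theorem plateau_nonneg (ε y : ℝ) : 0 ≤ plateau ε y :=
  mul_nonneg (Real.smoothTransition.nonneg _) (Real.smoothTransition.nonneg _)

theorem plateau_le_one (ε y : ℝ) : plateau ε y ≤ 1 :=
  mul_le_one₀ (Real.smoothTransition.le_one _) (Real.smoothTransition.nonneg _)
    (Real.smoothTransition.le_one _)

theorem plateau_eq_zero_of_nonneg (hε : 0 ≤ ε) {y : ℝ} (hy : 0 ≤ y) : plateau ε y = 0 := by
  rw [plateau, Real.smoothTransition.zero_of_nonpos (x := -y / ε)
    (div_nonpos_of_nonpos_of_nonneg (by linarith) hε), mul_zero]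

theorem plateau_neg_one (ε : ℝ) : plateau ε (-1) = 0 := by
  simp [plateau]

theorem plateau_eq_one (hε : 0 < ε) {y : ℝ} (h₁ : -1 + ε ≤ y) (h₂ : y ≤ -ε) :
    plateau ε y = 1 := by
  rw [plateau, Real.smoothTransition.one_of_one_le ((le_div_iff₀ hε).2 (by linarith)),
    Real.smoothTransition.one_of_one_le ((le_div_iff₀ hε).2 (by linarith)), mul_one]

theorem contDiff_tentSlope {n : ℕ∞} (ε : ℝ) : ContDiff ℝ n (tentSlope ε) :=
  (contDiff_plateau ε).sub ((contDiff_plateau ε).comp contDiff_neg)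

theorem abs_tentSlope_le_one (ε y : ℝ) : |tentSlope ε y| ≤ 1 := by
  rw [tentSlope, abs_le]
  constructor <;> linarith [plateau_nonneg ε y, plateau_le_one ε y, plateau_nonneg ε (-y),
    plateau_le_one ε (-y)]

theorem tentSlope_neg (ε y : ℝ) : tentSlope ε (-y) = -tentSlope ε y := by
  simp [tentSlope]

theorem tentSlope_neg_one (hε : 0 ≤ ε) : tentSlope ε (-1) = 0 := by
  rw [tentSlope, neg_neg, plateau_neg_one, plateau_eq_zero_of_nonneg hε zero_le_one, sub_zero]

theorem tentSlope_one (hε : 0 ≤ ε) : tentSlope ε 1 = 0 := by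
  rw [← neg_neg (1 : ℝ), tentSlope_neg, tentSlope_neg_one hε, neg_zero]

theorem hasDerivAt_tent (ε y : ℝ) : HasDerivAt (tent ε) (tentSlope ε y) y :=
  ((contDiff_tentSlope (n := 0) ε).continuous.integral_hasStrictDerivAt (-1) y).hasDerivAt

theorem deriv_tent (ε : ℝ) : deriv (tent ε) = tentSlope ε :=
  funext fun y => (hasDerivAt_tent ε y).deriv

theorem contDiff_tent (ε : ℝ) : ContDiff ℝ 2 (tent ε) := by
  rw [show (2 : WithTop ℕ∞) = 1 + 1 from rfl, contDiff_succ_iff_deriv, deriv_tent]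
  exact ⟨fun y => (hasDerivAt_tent ε y).differentiableAt, by simp, contDiff_tentSlope ε⟩

theorem tent_one (ε : ℝ) : tent ε 1 = 0 := by
  have hodd := intervalIntegral.integral_comp_neg (a := -1) (b := 1) (tentSlope ε)
  simp only [tentSlope_neg, intervalIntegral.integral_neg, neg_neg] at hodd
  rw [tent]
  linarith

theorem adm_tent (hε : 0 ≤ ε) : Adm (tent ε) :=
  ⟨contDiff_tent ε, intervalIntegral.integral_same, tent_one ε,
    by rw [deriv_tent, tentSlope_neg_one hε], by rw [deriv_tent, tentSlope_one hε]⟩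

theorem one_sub_two_mul_le_tent_zero (hε : 0 < ε) (hε' : ε ≤ 1 / 2) : 1 - 2 * ε ≤ tent ε 0 := by
  have hslope : ∀ t ∈ uIcc (-1 : ℝ) 0, tentSlope ε t = plateau ε t := fun t ht => by
    rw [uIcc_of_le (by norm_num)] at ht
    rw [tentSlope, plateau_eq_zero_of_nonneg (y := -t) hε.le (by linarith [ht.2]), sub_zero]
  have hflat : ∫ t in (-1 + ε)..(-ε), plateau ε t = 1 - 2 * ε := by
    rw [intervalIntegral.integral_congr (g := fun _ => (1 : ℝ)) fun t ht => by
      rw [uIcc_of_le (by linarith)] at ht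
      exact plateau_eq_one hε ht.1 ht.2]
    simp only [intervalIntegral.integral_const, smul_eq_mul, mul_one]
    ring
  rw [tent, intervalIntegral.integral_congr hslope, ← hflat]
  exact intervalIntegral.integral_mono_interval (by linarith) (by linarith) (by linarith)
    (ae_of_all _ fun t => plateau_nonneg ε t)
    ((contDiff_plateau (n := 0) ε).continuous.intervalIntegrable _ _)

theorem integral_deriv_tent_sq_le_two (ε : ℝ) : ∫ y in (-1:ℝ)..1, deriv (tent ε) y ^ 2 ≤ 2 := by
  have hle : ∀ y, tentSlope ε y ^ 2 ≤ 1 := fun y => by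
    rw [← sq_abs, sq_le_one_iff_abs_le_one, abs_abs]
    exact abs_tentSlope_le_one ε y
  rw [deriv_tent]
  calc ∫ y in (-1:ℝ)..1, tentSlope ε y ^ 2 ≤ ∫ _ in (-1:ℝ)..1, (1 : ℝ) :=
        intervalIntegral.integral_mono_on (by norm_num)
          (((contDiff_tentSlope (n := 0) ε).continuous.pow 2).intervalIntegrable _ _)
          intervalIntegrable_const fun y _ => hle y
    _ = 2 := by norm_num

end Tent

theorem XivcSet_nonempty {g ρp ρm B : ℝ} (hB : 2 * B ^ 2 < g * (ρp - ρm)) :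
    (XivcSet g ρp ρm B).Nonempty := by
  set G := g * (ρp - ρm)
  have hG : 0 < G := lt_of_le_of_lt (by positivity) hB
  -- `G (1 - 2ε)² ≥ G (1 - 4ε)`, which exceeds `2B²` as soon as `4εG < G - 2B²`
  set ε := (G - 2 * B ^ 2) / (8 * G)
  have hε : 0 < ε := div_pos (by linarith) (by linarith)
  have hεG : 8 * G * ε = G - 2 * B ^ 2 := mul_div_cancel₀ _ (by positivity)
  have hε' : ε ≤ 1 / 2 := by nlinarith [sq_nonneg B]
  obtain ⟨hC2, hm1, hp1, hd1, hdp1⟩ := adm_tent hε.le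
  refine ⟨_, tent ε, hC2, hm1, hp1, hd1, hdp1, ?_, rfl⟩
  have hsq : (1 - 2 * ε) ^ 2 ≤ tent ε 0 ^ 2 :=
    pow_le_pow_left₀ (by linarith) (one_sub_two_mul_le_tent_zero hε hε') 2
  nlinarith [mul_le_mul_of_nonneg_left (integral_deriv_tent_sq_le_two ε) (sq_nonneg B),
    mul_le_mul_of_nonneg_left hsq hG.le, mul_nonneg hG.le (sq_nonneg ε)]

theorem Adm.const_mul {ψ : ℝ → ℝ} (hψ : Adm ψ) (t : ℝ) : Adm (fun y => t * ψ y) := by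
  obtain ⟨hC2, hm1, hp1, hd1, hdp1⟩ := hψ
  exact ⟨contDiff_const.mul hC2, by simp [hm1], by simp [hp1],
    by simp [deriv_const_mul_field', hd1], by simp [deriv_const_mul_field', hdp1]⟩

theorem Jfun_const_mul (ρp ρm ξ t : ℝ) (ψ : ℝ → ℝ) :
    Jfun ρp ρm ξ (fun y => t * ψ y) = t ^ 2 * Jfun ρp ρm ξ ψ := by
  have h : ∀ y, (if 0 < y then ρp else ρm) * (ξ ^ 2 * (t * ψ y) ^ 2 + (t * deriv ψ y) ^ 2)
      = t ^ 2 * ((if 0 < y then ρp else ρm) * (ξ ^ 2 * ψ y ^ 2 + deriv ψ y ^ 2)) :=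
    fun y => by ring
  simp only [Jfun, deriv_const_mul_field', h, intervalIntegral.integral_const_mul]
  ring

theorem E0_const_mul (g ρp ρm B ξ t : ℝ) (ψ : ℝ → ℝ) :
    E0 g ρp ρm B ξ (fun y => t * ψ y) = t ^ 2 * E0 g ρp ρm B ξ ψ := by
  have h : ∀ y, B ^ 2 * ((t * deriv ψ y) ^ 2 + (t * deriv (deriv ψ) y) ^ 2 / ξ ^ 2)
      = t ^ 2 * (B ^ 2 * (deriv ψ y ^ 2 + deriv (deriv ψ) y ^ 2 / ξ ^ 2)) :=
    fun y => by ring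
  simp only [E0, deriv_const_mul_field', h, intervalIntegral.integral_const_mul]
  ring

theorem E1_nonneg {μp μm : ℝ} (hμp : 0 ≤ μp) (hμm : 0 ≤ μm) (ξ : ℝ) (ψ : ℝ → ℝ) :
    0 ≤ E1 μp μm ξ ψ :=
  mul_nonneg (by norm_num) (intervalIntegral.integral_nonneg (by norm_num) fun _ _ =>
    mul_nonneg (by split_ifs <;> assumption) (by positivity))

theorem neg_le_E0 (g ρp ρm B ξ : ℝ) (ψ : ℝ → ℝ) :
    -(1 / 2 * (g * (ρp - ρm)) * ψ 0 ^ 2) ≤ E0 g ρp ρm B ξ ψ := by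
  have h : 0 ≤ ∫ y in (-1:ℝ)..1, B ^ 2 * (deriv ψ y ^ 2 + deriv (deriv ψ) y ^ 2 / ξ ^ 2) :=
    intervalIntegral.integral_nonneg (by norm_num) fun _ _ => by positivity
  rw [E0]
  linarith

theorem ContDiff.continuous_deriv_deriv {f : ℝ → ℝ} (hf : ContDiff ℝ 2 f) :
    Continuous (deriv (deriv f)) :=
  (contDiff_succ_iff_deriv.1 (show ContDiff ℝ (1 + 1) f from hf)).2.2.continuous_deriv le_rfl

theorem E0_eq {g ρp ρm B ξ : ℝ} {φ : ℝ → ℝ} (hφ : ContDiff ℝ 2 φ) :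
    E0 g ρp ρm B ξ φ = (B ^ 2 / ξ ^ 2 * (∫ y in (-1:ℝ)..1, deriv (deriv φ) y ^ 2)
      - (g * (ρp - ρm) * φ 0 ^ 2 - B ^ 2 * ∫ y in (-1:ℝ)..1, deriv φ y ^ 2)) / 2 := by
  have h1 : Continuous fun y => deriv φ y ^ 2 := (hφ.continuous_deriv one_le_two).pow 2
  have h2 : Continuous fun y => deriv (deriv φ) y ^ 2 := hφ.continuous_deriv_deriv.pow 2
  have h : ∀ y, B ^ 2 * (deriv φ y ^ 2 + deriv (deriv φ) y ^ 2 / ξ ^ 2)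
      = B ^ 2 * deriv φ y ^ 2 + B ^ 2 / ξ ^ 2 * deriv (deriv φ) y ^ 2 :=
    fun y => by ring
  simp only [E0, h]
  rw [intervalIntegral.integral_add ((h1.intervalIntegrable _ _).const_mul _)
    ((h2.intervalIntegrable _ _).const_mul _), intervalIntegral.integral_const_mul,
    intervalIntegral.integral_const_mul]
  ring

theorem Adm.two_mul_sq_le_integral_deriv_sq {ψ : ℝ → ℝ} (hψ : Adm ψ) :
    2 * ψ 0 ^ 2 ≤ ∫ y in (-1:ℝ)..1, deriv ψ y ^ 2 :=
  have hC1 : ContDiff ℝ 1 ψ := hψ.1.of_le one_le_two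
  _root_.two_mul_sq_le_integral_deriv_sq hC1.contDiffOn.absolutelyContinuousOnInterval
    hC1.contDiffOn.absolutelyContinuousOnInterval
    (((hψ.1.continuous_deriv one_le_two).pow 2).intervalIntegrable _ _) hψ.2.1 hψ.2.2.1

theorem Adm.mul_sq_le_Jfun {ρp ρm : ℝ} (hρm : 0 ≤ ρm) (hρ : ρm ≤ ρp) (ξ : ℝ) {ψ : ℝ → ℝ}
    (hψ : Adm ψ) : ρm * ψ 0 ^ 2 ≤ Jfun ρp ρm ξ ψ := by
  have hc : Continuous (deriv ψ) := hψ.1.continuous_deriv one_le_two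
  have hψc : Continuous ψ := hψ.1.continuous
  have hweight : Monotone fun y : ℝ => if 0 < y then ρp else ρm := fun x y hxy => by
    dsimp only
    split_ifs <;> first | rfl | assumption | linarith
  have hmono : ∫ y in (-1:ℝ)..1, ρm * deriv ψ y ^ 2
      ≤ ∫ y in (-1:ℝ)..1, (if 0 < y then ρp else ρm) * (ξ ^ 2 * ψ y ^ 2 + deriv ψ y ^ 2) := by
    refine intervalIntegral.integral_mono_on (by norm_num)
      ((hc.pow 2).intervalIntegrable _ _ |>.const_mul _)
      (hweight.intervalIntegrable.mul_continuousOn (by fun_prop)) fun y _ => ?_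
    calc ρm * deriv ψ y ^ 2 ≤ ρm * (ξ ^ 2 * ψ y ^ 2 + deriv ψ y ^ 2) := by gcongr; nlinarith
      _ ≤ _ := by gcongr; split_ifs <;> linarith
  rw [intervalIntegral.integral_const_mul] at hmono
  rw [Jfun]
  nlinarith [hψ.two_mul_sq_le_integral_deriv_sq]

theorem alpha_le {ρp ρm μp μm g B ξ s : ℝ} (hρm : 0 < ρm) (hρ : ρm ≤ ρp) (hμp : 0 ≤ μp)
    (hμm : 0 ≤ μm) (hG : 0 ≤ g * (ρp - ρm)) (hs : 0 ≤ s) {ψ : ℝ → ℝ} (hψ : Adm ψ)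
    (hJ : Jfun ρp ρm ξ ψ = 1) :
    alpha ρp ρm μp μm g B ξ s ≤ ξ ^ 2 * E0 g ρp ρm B ξ ψ + s * E1 μp μm ξ ψ := by
  refine csInf_le ⟨-(ξ ^ 2 * (g * (ρp - ρm) / (2 * ρm))), ?_⟩ ⟨ψ, hψ, hJ, rfl⟩
  rintro _ ⟨φ, hφ, hJφ, rfl⟩
  have hφ0 : φ 0 ^ 2 ≤ 1 / ρm := by
    rw [le_div_iff₀ hρm]
    linarith [hφ.mul_sq_le_Jfun hρm.le hρ ξ]
  have hE0 : -(g * (ρp - ρm) / (2 * ρm)) ≤ E0 g ρp ρm B ξ φ :=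
    calc -(g * (ρp - ρm) / (2 * ρm)) = -(1 / 2 * (g * (ρp - ρm)) * (1 / ρm)) := by ring
      _ ≤ -(1 / 2 * (g * (ρp - ρm)) * φ 0 ^ 2) := by gcongr
      _ ≤ E0 g ρp ρm B ξ φ := neg_le_E0 g ρp ρm B ξ φ
  nlinarith [mul_nonneg hs (E1_nonneg hμp hμm ξ φ), mul_le_mul_of_nonneg_left hE0 (sq_nonneg ξ)]

theorem exists_adm_E0_neg {g ρp ρm B ξ : ℝ} (hξ : ξ ≠ 0) (hne : (XivcSet g ρp ρm B).Nonempty)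
    (hlt : sInf (XivcSet g ρp ρm B) < ξ ^ 2) :
    ∃ φ, Adm φ ∧ φ 0 ≠ 0 ∧ E0 g ρp ρm B ξ φ < 0 := by
  obtain ⟨_, ⟨φ, hC2, hm1, hp1, hd1, hdp1, hD, rfl⟩, hr⟩ := exists_lt_of_csInf_lt hne hlt
  refine ⟨φ, ⟨hC2, hm1, hp1, hd1, hdp1⟩, fun h0 => ?_, ?_⟩
  · have hP : 0 ≤ B ^ 2 * ∫ y in (-1:ℝ)..1, deriv φ y ^ 2 :=
      mul_nonneg (sq_nonneg B)
        (intervalIntegral.integral_nonneg (by norm_num) fun _ _ => sq_nonneg _)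
    rw [h0] at hD
    linarith
  · have hQ := (div_lt_iff₀ hD).1 hr
    have hQ' : B ^ 2 / ξ ^ 2 * ∫ y in (-1:ℝ)..1, deriv (deriv φ) y ^ 2
        < g * (ρp - ρm) * φ 0 ^ 2 - B ^ 2 * ∫ y in (-1:ℝ)..1, deriv φ y ^ 2 := by
      rw [div_mul_eq_mul_div, div_lt_iff₀ (by positivity)]
      linarith
    rw [E0_eq hC2]
    linarith

theorem exists_normalized_E0_neg {g ρp ρm B ξ : ℝ} (hρm : 0 < ρm) (hρ : ρm ≤ ρp) (hξ : ξ ≠ 0)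
    (hne : (XivcSet g ρp ρm B).Nonempty) (hlt : sInf (XivcSet g ρp ρm B) < ξ ^ 2) :
    ∃ ψ, Adm ψ ∧ Jfun ρp ρm ξ ψ = 1 ∧ E0 g ρp ρm B ξ ψ < 0 := by
  obtain ⟨φ, hφ, hφ0, hE0⟩ := exists_adm_E0_neg hξ hne hlt
  have hJ : 0 < Jfun ρp ρm ξ φ := (by positivity : 0 < ρm * φ 0 ^ 2).trans_le
    (hφ.mul_sq_le_Jfun hρm.le hρ ξ)
  have ht : 0 < (√(Jfun ρp ρm ξ φ))⁻¹ := inv_pos.2 (Real.sqrt_pos.2 hJ)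
  refine ⟨_, hφ.const_mul (√(Jfun ρp ρm ξ φ))⁻¹, ?_, ?_⟩
  · rw [Jfun_const_mul, inv_pow, Real.sq_sqrt hJ.le, inv_mul_cancel₀ hJ.ne']
  · rw [E0_const_mul]
    exact mul_neg_of_pos_of_neg (pow_pos ht 2) hE0

theorem exists_pos_forall_add_mul_neg {A : ℝ} (hA : A < 0) (C : ℝ) :
    ∃ s₀ : ℝ, 0 < s₀ ∧ ∀ s : ℝ, 0 < s → s ≤ s₀ → A + s * C < 0 := by
  have hs₀ : 0 < -A / (|C| + 1) := div_pos (neg_pos.2 hA) (by positivity)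
  refine ⟨-A / (|C| + 1), hs₀, fun s hs hss => ?_⟩
  have hsC : s * |C| < -A :=
    calc s * |C| ≤ -A / (|C| + 1) * |C| := by gcongr
      _ < -A / (|C| + 1) * (|C| + 1) := by gcongr; linarith
      _ = -A := div_mul_cancel₀ _ (by positivity)
  linarith [mul_le_mul_of_nonneg_left (le_abs_self C) hs.le]

theorem alpha_neg_of_unstable_regime_general
    (ρp ρm μp μm g B Bc xivc : ℝ)
    (hρm : 0 < ρm) (hρ : ρm < ρp) (hμp : 0 < μp) (hμm : 0 < μm) (hg : 0 < g)
    (hBcsq : Bc ^ 2 = sSup (BcSet g ρp ρm))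
    (hBlt : |B| < Bc)
    (hxivc0 : 0 ≤ xivc) (hxivcsq : xivc ^ 2 = sInf (XivcSet g ρp ρm B))
    (ξ : ℝ) (hξ : ξ ≠ 0) (hξgt : xivc < |ξ|) :
    ∃ s₀ : ℝ, 0 < s₀ ∧ ∀ s : ℝ, 0 < s → s ≤ s₀ → alpha ρp ρm μp μm g B ξ s < 0 := by
  have hG : 0 ≤ g * (ρp - ρm) := mul_nonneg hg.le (sub_nonneg.2 hρ.le)
  have hξ2 : sInf (XivcSet g ρp ρm B) < ξ ^ 2 := by
    rw [← hxivcsq, ← sq_abs ξ]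
    exact pow_lt_pow_left₀ hξgt hxivc0 two_ne_zero
  obtain ⟨ψ, hψ, hJ, hE0⟩ := exists_normalized_E0_neg hρm hρ.le hξ
    (XivcSet_nonempty (two_mul_sq_lt_of_abs_lt hG hBcsq hBlt)) hξ2
  obtain ⟨s₀, hs₀, hneg⟩ := exists_pos_forall_add_mul_neg
    (mul_neg_of_pos_of_neg (by positivity : (0 : ℝ) < ξ ^ 2) hE0) (E1 μp μm ξ ψ)
  exact ⟨s₀, hs₀, fun s hs hss =>
    (alpha_le hρm hρ.le hμp.le hμm.le hG hs.le hψ hJ).trans_lt (hneg s hs hss)⟩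

/-- if `|B| < |B|_c` and `|ξ| > |ξ|_{vc}^B` then `α(s) < 0` for all sufficiently
small `s > 0`. -/
theorem alpha_neg_of_unstable_regime
    (ρp ρm μp μm g B Bc xivc : ℝ)
    (hρm : 0 < ρm) (hρ : ρm < ρp) (hμp : 0 < μp) (hμm : 0 < μm) (hg : 0 < g)
    (hB : B ≠ 0) (hBc : 0 < Bc) (hBcsq : Bc ^ 2 = sSup (BcSet g ρp ρm))
    (hBlt : |B| < Bc)
    (hxivc0 : 0 ≤ xivc) (hxivcsq : xivc ^ 2 = sInf (XivcSet g ρp ρm B))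
    (ξ : ℝ) (hξ : ξ ≠ 0) (hξgt : xivc < |ξ|) :
    ∃ s₀ : ℝ, 0 < s₀ ∧ ∀ s : ℝ, 0 < s → s ≤ s₀ → alpha ρp ρm μp μm g B ξ s < 0 :=
  alpha_neg_of_unstable_regime_general ρp ρm μp μm g B Bc xivc hρm hρ hμp hμm hg hBcsq hBlt hxivc0
    hxivcsq ξ hξ hξgt

end
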